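/- arXiv:1703.04660 — 4 statements merged into one kernel-verified Lean document; each statement's English description precedes it below -/
import Mathlib

section
/- For every ε with 0 < ε < 3/4, there exists n ∈ ℕ such that P^[n](0) ∈ [1,2], where P(x) = x² + 1/4 + ε. Consequently, the postcritical set Ω(P_{1/4+ε}) contains a point of [1,2], and since Ω(P_{1/4}) ⊆ [0,1/2], the Hausdorff distance between Ω(P_{1/4+ε}) and Ω(P_{1/4}) is at least 1/2. -/
/-!
For `c = 1/4 + ε` the map `P_c` satisfies `P_c x - x = (x - 1/2)² + ε ≥ ε`, so the critical orbit
(which stays in `[0, ∞)`) increases by at least `ε` per step and eventually exceeds `1`. At the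
first such time the previous point lies in `[0, 1)`, hence the new one is at most `1 + c ≤ 2`.
For `c = 1/4` the closed interval `[0, 1/2]` is forward invariant and contains `0`, so it contains
the postcritical set; a point of `[1, 2]` is at distance at least `1/2` from it.
-/

/-- The postcritical set of the quadratic map `P_c(x) = x² + c`: the closure of
the forward orbit of the critical point `0`. -/
def postcriticalSet (c : ℝ) : Set ℝ :=
  closure (Set.range fun n : ℕ => (fun x : ℝ => x ^ 2 + c)^[n] 0)

open Set Metric

theorem add_natCast_mul_le_iterate {f : ℝ → ℝ} {δ : ℝ} (h : ∀ x, x + δ ≤ f x) (a : ℝ) (n : ℕ) :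
    a + n * δ ≤ f^[n] a := by
  induction n with
  | zero => simp
  | succ n ih =>
    rw [Function.iterate_succ_apply']
    push_cast
    linarith [h (f^[n] a)]

theorem exists_le_iterate_of_add_le {f : ℝ → ℝ} {δ : ℝ} (hδ : 0 < δ) (h : ∀ x, x + δ ≤ f x)
    (a b : ℝ) : ∃ n : ℕ, b ≤ f^[n] a := by
  obtain ⟨n, hn⟩ := exists_nat_gt ((b - a) / δ)
  refine ⟨n, le_trans ?_ (add_natCast_mul_le_iterate h a n)⟩
  rw [div_lt_iff₀ hδ] at hn
  linarith

theorem exists_mem_Icc_of_exists_le {u : ℕ → ℝ} {a b : ℝ} (h₀ : u 0 < a) (hreach : ∃ n, a ≤ u n)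
    (hjump : ∀ m, u m < a → u (m + 1) ≤ b) : ∃ n, u n ∈ Icc a b := by
  classical
  obtain ⟨m, hm⟩ : ∃ m, Nat.find hreach = m + 1 :=
    Nat.exists_eq_succ_of_ne_zero fun h => (Nat.find_spec hreach).not_gt (by rwa [h])
  have hbelow : u m < a := not_le.1 (Nat.find_min hreach (by omega))
  exact ⟨_, Nat.find_spec hreach, hm ▸ hjump m hbelow⟩

theorem le_hausdorffEDist_of_mem {α : Type*} [PseudoMetricSpace α] {s t : Set α} {x : α}
    {r : ℝ} (hx : x ∈ s) (h : ∀ y ∈ t, r ≤ dist x y) :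
    ENNReal.ofReal r ≤ hausdorffEDist s t :=
  (le_infEDist.2 fun y hy => by
    rw [edist_dist]
    exact ENNReal.ofReal_le_ofReal (h y hy)).trans (infEDist_le_hausdorffEDist_of_mem hx)

section Quadratic

variable {c : ℝ}

theorem add_sub_le_sq_add (x : ℝ) : x + (c - 1 / 4) ≤ x ^ 2 + c := by
  nlinarith [sq_nonneg (x - 1 / 2)]

theorem mapsTo_sq_add_Ici_zero (hc : 0 ≤ c) : MapsTo (fun x : ℝ => x ^ 2 + c) (Ici 0) (Ici 0) :=
  fun x _ => by simp only [mem_Ici]; positivity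

theorem mapsTo_sq_add_quarter_Icc :
    MapsTo (fun x : ℝ => x ^ 2 + 1 / 4) (Icc 0 (1 / 2)) (Icc 0 (1 / 2)) :=
  fun x ⟨h₀, h₁⟩ => ⟨by positivity, by nlinarith⟩

theorem iterate_mem_postcriticalSet (n : ℕ) :
    (fun x : ℝ => x ^ 2 + c)^[n] 0 ∈ postcriticalSet c :=
  subset_closure ⟨n, rfl⟩

theorem postcriticalSet_subset {s : Set ℝ} (hs : IsClosed s) (h₀ : (0 : ℝ) ∈ s)
    (hmaps : MapsTo (fun x : ℝ => x ^ 2 + c) s s) : postcriticalSet c ⊆ s :=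
  closure_minimal (range_subset_iff.2 fun n => hmaps.iterate n h₀) hs

theorem exists_iterate_mem_Icc_one_two (hc : 1 / 4 < c) (hc' : c ≤ 1) :
    ∃ n : ℕ, (fun x : ℝ => x ^ 2 + c)^[n] 0 ∈ Icc (1 : ℝ) 2 := by
  set f := fun x : ℝ => x ^ 2 + c
  have hnonneg : ∀ m, 0 ≤ f^[m] 0 := fun m =>
    (mapsTo_sq_add_Ici_zero (by linarith)).iterate m (mem_Ici.2 le_rfl)
  refine exists_mem_Icc_of_exists_le (u := fun m => f^[m] 0) (by simp)
    (exists_le_iterate_of_add_le (sub_pos.2 hc) add_sub_le_sq_add 0 1) fun m hm => ?_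
  simp only [Function.iterate_succ_apply', f]
  nlinarith [hnonneg m]

end Quadratic

/-- For every `0 < ε < 3/4` there is `n` with `P_{1/4+ε}^[n](0) ∈ [1,2]`;
consequently the postcritical set `Ω(P_{1/4+ε})` meets `[1,2]`, while
`Ω(P_{1/4}) ⊆ [0,1/2]`, so the Hausdorff distance between the two postcritical
sets is at least `1/2`. -/
theorem postcritical_sets_parabolic_implosion (ε : ℝ) (hε : 0 < ε) (hε' : ε < 3 / 4) :
    (∃ n : ℕ, (fun x : ℝ => x ^ 2 + (1 / 4 + ε))^[n] 0 ∈ Set.Icc (1 : ℝ) 2) ∧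
    (postcriticalSet (1 / 4 + ε) ∩ Set.Icc (1 : ℝ) 2).Nonempty ∧
    postcriticalSet (1 / 4) ⊆ Set.Icc (0 : ℝ) (1 / 2) ∧
    (1 / 2 : ENNReal) ≤ EMetric.hausdorffEdist (postcriticalSet (1 / 4 + ε)) (postcriticalSet (1 / 4)) := by
  obtain ⟨n, hn⟩ := exists_iterate_mem_Icc_one_two (c := 1 / 4 + ε) (by linarith) (by linarith)
  have hsub : postcriticalSet (1 / 4) ⊆ Icc (0 : ℝ) (1 / 2) :=
    postcriticalSet_subset isClosed_Icc (by norm_num) mapsTo_sq_add_quarter_Icc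
  refine ⟨⟨n, hn⟩, ⟨_, iterate_mem_postcriticalSet n, hn⟩, hsub, ?_⟩
  have hdist : ENNReal.ofReal (1 / 2) ≤
      hausdorffEDist (postcriticalSet (1 / 4 + ε)) (postcriticalSet (1 / 4)) :=
    le_hausdorffEDist_of_mem (iterate_mem_postcriticalSet n) fun y hy => by
      rw [Real.dist_eq]
      exact le_abs.2 (.inl (by linarith [hn.1, (hsub hy).2]))
  rwa [ENNReal.ofReal_div_of_pos two_pos, ENNReal.ofReal_one, ENNReal.ofReal_ofNat] at hdist
end

section
/- The real quadratic map P(x) = x² - 7/4 has a parabolic periodic orbit of period 3 with multiplier 1: there exists w ∈ ℝ such that P^[3](w) = w, P(w) ≠ w, and the derivative of P^[3] at w equals 1. -/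
/-!
The 3-cycle born at `c = -7/4` is a double root: `P^[3](x) - x` factors as
`(x² - x - 7/4) · R(x)²` with `R = parabolicCycleCubic`. A real root `w` of `R` (which exists by the
intermediate value theorem) is therefore periodic, and the squared factor makes the derivative of
`P^[3](x) - x` vanish at `w`, so the multiplier is `1`. The fixed-point factor `x² - x - 7/4` is
coprime to `R`, so `w` is not fixed.
-/

noncomputable def parabolicCycleCubic (x : ℝ) : ℝ := x ^ 3 + x ^ 2 / 2 - 9 * x / 4 - 1 / 8

theorem iterate_three_quadratic_eq (x : ℝ) :
    (fun x : ℝ => x ^ 2 - 7 / 4)^[3] x = x + (x ^ 2 - x - 7 / 4) * parabolicCycleCubic x ^ 2 := by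
  simp only [Function.iterate_succ, Function.iterate_zero, Function.comp_apply, id,
    parabolicCycleCubic]
  ring

theorem exists_parabolicCycleCubic_eq_zero : ∃ w : ℝ, parabolicCycleCubic w = 0 := by
  have hcont : ContinuousOn parabolicCycleCubic (Set.Icc 0 2) := by
    unfold parabolicCycleCubic; fun_prop
  have hsign : (0 : ℝ) ∈ Set.Icc (parabolicCycleCubic 0) (parabolicCycleCubic 2) := by
    constructor <;> norm_num [parabolicCycleCubic]
  obtain ⟨w, -, hw⟩ := intermediate_value_Icc (by norm_num : (0 : ℝ) ≤ 2) hcont hsign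
  exact ⟨w, hw⟩

theorem quadratic_ne_self_of_parabolicCycleCubic_eq_zero {w : ℝ} (hw : parabolicCycleCubic w = 0) :
    w ^ 2 - 7 / 4 ≠ w := by
  intro hfix
  -- Bézout identity: the cubic and the fixed-point quadratic generate the unit ideal.
  have bezout : (7 / 2 - w) * parabolicCycleCubic w + (w ^ 2 - 2 * w - 17 / 4) * (w ^ 2 - w - 7 / 4)
      = 7 := by
    unfold parabolicCycleCubic; ring
  rw [hw, show w ^ 2 - w - 7 / 4 = 0 by linarith] at bezout
  norm_num at bezout

theorem hasDerivAt_add_mul_sq_of_eq_zero {𝕜 : Type*} [NontriviallyNormedField 𝕜] {g h : 𝕜 → 𝕜}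
    {w : 𝕜} (hg : DifferentiableAt 𝕜 g w) (hh : DifferentiableAt 𝕜 h w) (hw : h w = 0) :
    HasDerivAt (fun x => x + g x * h x ^ 2) 1 w :=
  ((hasDerivAt_id w).add (hg.hasDerivAt.mul (hh.hasDerivAt.pow 2))).congr_deriv (by simp [hw])

/-- The real quadratic map `P(x) = x² - 7/4` has a parabolic periodic orbit of
period `3` with multiplier `1`: there is `w` with `P^[3](w) = w`, `P(w) ≠ w`,
and `(P^[3])′(w) = 1`. -/
theorem parabolic_period_three_orbit :
    ∃ w : ℝ, (fun x : ℝ => x ^ 2 - 7 / 4)^[3] w = w ∧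
      (fun x : ℝ => x ^ 2 - 7 / 4) w ≠ w ∧
      deriv ((fun x : ℝ => x ^ 2 - 7 / 4)^[3]) w = 1 := by
  obtain ⟨w, hw⟩ := exists_parabolicCycleCubic_eq_zero
  refine ⟨w, by rw [iterate_three_quadratic_eq, hw]; ring,
    quadratic_ne_self_of_parabolicCycleCubic_eq_zero hw, ?_⟩
  rw [funext iterate_three_quadratic_eq]
  exact (hasDerivAt_add_mul_sq_of_eq_zero (by fun_prop)
    (by unfold parabolicCycleCubic; fun_prop) hw).deriv
end

section
/- For the real quadratic map P(x) = x² - 7/4, the subsequence (P^[3n](0))_{n≥0} of the critical orbit converges to a point w satisfying P^[3](w) = w and P(w) ≠ w (the parabolic period-3 point of P nearest to 0). -/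
/-!
On `[-1/16, 0]` the map `P³` is increasing and lies below the diagonal, and it has a fixed point
`w` there. Hence the `P³`-orbit of `0` decreases and stays above `w`, so it converges to a fixed
point of `P³` in `[w, 0]`; that point is not fixed by `P`, whose fixed points are `(1 ± 2√2)/2`.
-/

open Filter Set Function Topology

theorem exists_tendsto_iterate_of_monotoneOn_of_map_le {α : Type*}
    [ConditionallyCompleteLinearOrder α] [TopologicalSpace α] [OrderTopology α]
    {f : α → α} {a b : α} (hab : a ≤ b) (ha : f a = a) (hmono : MonotoneOn f (Icc a b))
    (hle : ∀ x ∈ Icc a b, f x ≤ x) :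
    ∃ L ∈ Icc a b, Tendsto (fun n => f^[n] b) atTop (𝓝 L) := by
  have hmem : ∀ n, f^[n] b ∈ Icc a b := by
    intro n
    induction n with
    | zero => exact ⟨hab, le_rfl⟩
    | succ n ih =>
      rw [iterate_succ_apply']
      exact ⟨ha ▸ hmono (left_mem_Icc.2 hab) ih ih.1, (hle _ ih).trans ih.2⟩
  have hanti : Antitone fun n => f^[n] b := antitone_nat_of_succ_le fun n => by
    rw [iterate_succ_apply']
    exact hle _ (hmem n)
  have hlim := tendsto_atTop_ciInf hanti ⟨a, forall_mem_range.2 fun n => (hmem n).1⟩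
  exact ⟨_, isClosed_Icc.mem_of_tendsto hlim (Eventually.of_forall hmem), hlim⟩

local notation "P" => fun x : ℝ => x ^ 2 - 7 / 4

/-- At `c = -7/4` the two period-three cycles of `x² + c` have merged into one parabolic cycle,
so the sextic factor of `P³(x) - x` is the square of the cubic vanishing on that cycle. -/
theorem iterate_three_sub_self (x : ℝ) :
    P^[3] x - x = (x ^ 2 - x - 7 / 4) * (x ^ 3 + x ^ 2 / 2 - 9 * x / 4 - 1 / 8) ^ 2 := by
  simp only [iterate_succ, iterate_zero, comp_apply, id_eq]
  ring

theorem exists_cubic_root_mem_Icc :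
    ∃ w ∈ Icc (-1 / 16 : ℝ) 0, w ^ 3 + w ^ 2 / 2 - 9 * w / 4 - 1 / 8 = 0 :=
  intermediate_value_Icc' (by norm_num) (by fun_prop) ⟨by norm_num, by norm_num⟩

theorem sq_sub_self_sub_neg_of_mem_Icc {x : ℝ} (hx : x ∈ Icc (-1 / 16 : ℝ) 0) :
    x ^ 2 - x - 7 / 4 < 0 := by
  nlinarith [hx.1, hx.2]

theorem iterate_three_le_self_of_mem_Icc {x : ℝ} (hx : x ∈ Icc (-1 / 16 : ℝ) 0) :
    P^[3] x ≤ x := by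
  have := iterate_three_sub_self x
  nlinarith [sq_sub_self_sub_neg_of_mem_Icc hx,
    sq_nonneg (x ^ 3 + x ^ 2 / 2 - 9 * x / 4 - 1 / 8)]

theorem monotoneOn_iterate_three : MonotoneOn P^[3] (Icc (-1 / 16) 0) := by
  have hanti : AntitoneOn P (Iic 0) := fun x hx y hy hxy => by
    simp only [mem_Iic] at hx hy
    nlinarith
  have hmono : MonotoneOn P (Ici 0) := fun x hx y hy hxy => by
    simp only [mem_Ici] at hx hy
    nlinarith
  have hmaps₁ : MapsTo P (Icc (-1 / 16) 0) (Icc (-7 / 4) (-3 / 2)) := fun x hx => by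
    simp only [mem_Icc] at hx ⊢
    constructor <;> nlinarith
  have hmaps₂ : MapsTo P (Icc (-7 / 4) (-3 / 2)) (Ici 0) := fun x hx => by
    simp only [mem_Icc, mem_Ici] at hx ⊢
    nlinarith
  exact hmono.comp ((hanti.mono fun x hx => hx.2.trans (by norm_num)).comp
    (hanti.mono fun x hx => hx.2) hmaps₁) (hmaps₂.comp hmaps₁)

/-- For `P(x) = x² - 7/4`, the subsequence `(P^[3n](0))` of the critical orbit
converges to a point `w` with `P^[3](w) = w` and `P(w) ≠ w`. -/
theorem critical_orbit_converges_to_parabolic_period_three :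
    ∃ w : ℝ, Filter.Tendsto (fun n : ℕ => (fun x : ℝ => x ^ 2 - 7 / 4)^[3 * n] 0)
        Filter.atTop (nhds w) ∧
      (fun x : ℝ => x ^ 2 - 7 / 4)^[3] w = w ∧
      (fun x : ℝ => x ^ 2 - 7 / 4) w ≠ w := by
  obtain ⟨w, hw, hroot⟩ := exists_cubic_root_mem_Icc
  have hfix : P^[3] w = w := by
    have := iterate_three_sub_self w
    rw [hroot] at this
    linarith
  have hsub : Icc w 0 ⊆ Icc (-1 / 16) 0 := Icc_subset_Icc_left hw.1
  obtain ⟨L, hL, hlim⟩ := exists_tendsto_iterate_of_monotoneOn_of_map_le hw.2 hfix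
    (monotoneOn_iterate_three.mono hsub) fun x hx => iterate_three_le_self_of_mem_Icc (hsub hx)
  refine ⟨L, by simpa only [iterate_mul] using hlim,
    isFixedPt_of_tendsto_iterate hlim (by fun_prop), fun h => ?_⟩
  have := sq_sub_self_sub_neg_of_mem_Icc (hsub hL)
  simp only at h
  linarith
end

section
/- Let D = B(z₀, r) ⊆ ℂ be an open disk and let f be a function holomorphic on a neighbourhood of the closed disk D̄ such that f(D̄) ⊆ D. Then f has a unique fixed point p in D, this fixed point is attracting (|f′(p)| < 1), and the diameters of the iterated images decay geometrically: there exist C > 0 and 0 < λ < 1 such that for every k ∈ ℕ, the diameter of f^[k](D̄) is at most C·λ^k; in particular f^[k](z) → p uniformly on D̄. -/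
/-!
The Schwarz–Pick lemma says that holomorphic self-maps of the unit disc do not increase the
pseudo-hyperbolic distance `‖(a - z) / (1 - conj a * z)‖`. By compactness `f` maps the closed
disc into a strictly smaller concentric open disc, so after rescaling, `f` is a self-map of the
unit disc with values in `ball 0 t`, `t < 1`; writing `f = t • (f / t)` and using how the
pseudo-hyperbolic distance behaves under `z ↦ t z` shows that `f` contracts it by the factor
`2t / (1 + t²) < 1`. On the smaller disc the pseudo-hyperbolic and Euclidean distances are
comparable, so the diameters of `f^[n]` of the closed disc decay geometrically. This gives a
unique fixed point `p` and uniform convergence of the iterates; finally, Schwarz's lemma for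
`f^[n]` on a small disc around `p` gives `‖f'(p)‖ ^ n ≤ C λ ^ n`, hence `‖f'(p)‖ ≤ λ < 1`.
-/

open Metric Set Function Filter ComplexConjugate
open scoped Topology

/-- `‖mobius a z‖` is the pseudo-hyperbolic distance between `a` and `z` in the unit disc. -/
noncomputable def mobius (a z : ℂ) : ℂ := (a - z) / (1 - conj a * z)

lemma one_sub_conj_mul_ne_zero {a z : ℂ} (ha : ‖a‖ < 1) (hz : ‖z‖ ≤ 1) :
    1 - conj a * z ≠ 0 := by
  have : ‖conj a * z‖ < 1 := by
    rw [norm_mul, RCLike.norm_conj]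
    nlinarith [norm_nonneg a, norm_nonneg z]
  intro h
  rw [← sub_eq_zero.1 h, norm_one] at this
  exact this.false

lemma sq_norm_one_sub_conj_mul_sub_sq_norm_sub (a z : ℂ) :
    ‖1 - conj a * z‖ ^ 2 - ‖a - z‖ ^ 2 = (1 - ‖a‖ ^ 2) * (1 - ‖z‖ ^ 2) := by
  simp only [Complex.sq_norm, Complex.normSq_apply, Complex.sub_re, Complex.sub_im,
    Complex.mul_re, Complex.mul_im, Complex.conj_re, Complex.conj_im, Complex.one_re,
    Complex.one_im]
  ring

lemma norm_mobius (a z : ℂ) : ‖mobius a z‖ = ‖a - z‖ / ‖1 - conj a * z‖ :=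
  norm_div _ _

lemma norm_mobius_lt_one {a z : ℂ} (ha : ‖a‖ < 1) (hz : ‖z‖ < 1) : ‖mobius a z‖ < 1 := by
  rw [norm_mobius, div_lt_one (norm_pos_iff.2 (one_sub_conj_mul_ne_zero ha hz.le))]
  refine lt_of_pow_lt_pow_left₀ 2 (norm_nonneg _) ?_
  have h := sq_norm_one_sub_conj_mul_sub_sq_norm_sub a z
  have hprod : 0 < (1 - ‖a‖ ^ 2) * (1 - ‖z‖ ^ 2) := by
    apply mul_pos <;> nlinarith [norm_nonneg a, norm_nonneg z]
  linarith

lemma mobius_mobius {a z : ℂ} (ha : ‖a‖ < 1) (hz : ‖z‖ < 1) : mobius a (mobius a z) = z := by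
  have hz' := one_sub_conj_mul_ne_zero ha hz.le
  have ha' := one_sub_conj_mul_ne_zero ha ha.le
  have hnum : a - mobius a z = z * (1 - conj a * a) / (1 - conj a * z) := by
    rw [eq_div_iff hz', mobius, sub_mul, div_mul_cancel₀ _ hz']; ring
  have hden : 1 - conj a * mobius a z = (1 - conj a * a) / (1 - conj a * z) := by
    rw [eq_div_iff hz', mobius, sub_mul, mul_div_assoc', div_mul_cancel₀ _ hz']; ring
  rw [mobius, hnum, hden, div_div_div_cancel_right₀ hz', mul_div_assoc, div_self ha', mul_one]

@[simp] lemma mobius_self (a : ℂ) : mobius a a = 0 := by simp [mobius]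

@[simp] lemma mobius_zero (a : ℂ) : mobius a 0 = a := by simp [mobius]

lemma differentiableOn_mobius {a : ℂ} (ha : ‖a‖ < 1) :
    DifferentiableOn ℂ (mobius a) (ball 0 1) :=
  ((differentiableOn_const a).sub differentiableOn_id).div
    ((differentiableOn_const 1).sub ((differentiableOn_const _).mul differentiableOn_id))
    fun _ hz => one_sub_conj_mul_ne_zero ha (mem_ball_zero_iff.1 hz).le

lemma mapsTo_mobius {a : ℂ} (ha : ‖a‖ < 1) : MapsTo (mobius a) (ball 0 1) (ball 0 1) :=
  fun _ hz => mem_ball_zero_iff.2 (norm_mobius_lt_one ha (mem_ball_zero_iff.1 hz))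

/-- The Schwarz–Pick lemma. -/
theorem norm_mobius_apply_le {g : ℂ → ℂ} (hd : DifferentiableOn ℂ g (ball 0 1))
    (hg : MapsTo g (ball 0 1) (ball 0 1)) {z w : ℂ} (hz : ‖z‖ < 1) (hw : ‖w‖ < 1) :
    ‖mobius (g w) (g z)‖ ≤ ‖mobius w z‖ := by
  have hgw : ‖g w‖ < 1 := mem_ball_zero_iff.1 (hg (mem_ball_zero_iff.2 hw))
  have hmaps := (mapsTo_mobius hgw).comp (hg.comp (mapsTo_mobius hw))
  have hdiff := (differentiableOn_mobius hgw).comp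
    (hd.comp (differentiableOn_mobius hw) (mapsTo_mobius hw)) (hg.comp (mapsTo_mobius hw))
  simpa [mobius_mobius hw hz] using Complex.norm_le_norm_of_mapsTo_ball hdiff
    (hmaps.mono_right ball_subset_closedBall) (by simp) (norm_mobius_lt_one hw hz)

lemma one_add_sq_mul_norm_one_sub_le {t : ℝ} (ht : t ^ 2 ≤ 1) {u : ℂ} (hu : ‖u‖ ≤ 1) :
    (1 + t ^ 2) * ‖1 - u‖ ≤ 2 * ‖1 - (t : ℂ) ^ 2 * u‖ := by
  refine le_of_pow_le_pow_left₀ two_ne_zero (by positivity) ?_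
  have hN : u.re ^ 2 + u.im ^ 2 ≤ 1 := by
    have := pow_le_one₀ (norm_nonneg u) hu (n := 2)
    rwa [Complex.sq_norm, Complex.normSq_apply, ← sq, ← sq] at this
  have h1 : (0 : ℝ) ≤ (1 - t ^ 2) ^ 2 * ((u.re + 1) ^ 2 + u.im ^ 2) := by positivity
  have h2 : (0 : ℝ) ≤ (1 - t ^ 2) * (2 + 2 * t ^ 2) * (1 - u.re ^ 2 - u.im ^ 2) :=
    mul_nonneg (mul_nonneg (by linarith) (by positivity)) (by linarith)
  simp only [mul_pow, Complex.sq_norm, Complex.normSq_apply, Complex.sub_re, Complex.sub_im,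
    Complex.mul_re, Complex.mul_im, Complex.one_re, Complex.one_im, ← Complex.ofReal_pow,
    Complex.ofReal_re, Complex.ofReal_im]
  nlinarith [h1, h2]

lemma norm_mobius_ofReal_mul_le {t : ℝ} (ht0 : 0 ≤ t) (ht1 : t ≤ 1) {a b : ℂ} (ha : ‖a‖ < 1)
    (hb : ‖b‖ ≤ 1) :
    ‖mobius (t * a) (t * b)‖ ≤ 2 * t / (1 + t ^ 2) * ‖mobius a b‖ := by
  have hu : ‖conj a * b‖ ≤ 1 := by
    rw [norm_mul, RCLike.norm_conj]
    nlinarith [norm_nonneg a, norm_nonneg b]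
  have hta : ‖(t : ℂ) * a‖ < 1 := by
    rw [norm_mul, Complex.norm_real, Real.norm_of_nonneg ht0]
    nlinarith [norm_nonneg a]
  have htb : ‖(t : ℂ) * b‖ ≤ 1 := by
    rw [norm_mul, Complex.norm_real, Real.norm_of_nonneg ht0]
    nlinarith [norm_nonneg b]
  have hden : conj ((t : ℂ) * a) * (t * b) = (t : ℂ) ^ 2 * (conj a * b) := by
    rw [map_mul, Complex.conj_ofReal]; ring
  have hpos := norm_pos_iff.2 (one_sub_conj_mul_ne_zero ha hb)
  have htpos := norm_pos_iff.2 (one_sub_conj_mul_ne_zero hta htb)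
  rw [hden] at htpos
  rw [norm_mobius, norm_mobius, hden, ← mul_sub, norm_mul, Complex.norm_real,
    Real.norm_of_nonneg ht0, div_mul_div_comm, div_le_div_iff₀ htpos (by positivity)]
  have hkey := one_add_sq_mul_norm_one_sub_le (by nlinarith) hu
  have hab : 0 ≤ t * ‖a - b‖ := by positivity
  nlinarith [mul_le_mul_of_nonneg_left hkey hab]

lemma norm_sub_le_two_mul_norm_mobius {a b : ℂ} (ha : ‖a‖ < 1) (hb : ‖b‖ ≤ 1) :
    ‖a - b‖ ≤ 2 * ‖mobius a b‖ := by
  have hpos := norm_pos_iff.2 (one_sub_conj_mul_ne_zero ha hb)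
  have hle : ‖1 - conj a * b‖ ≤ 2 := by
    calc ‖1 - conj a * b‖ ≤ ‖(1 : ℂ)‖ + ‖a‖ * ‖b‖ := by
          simpa [norm_mul] using norm_sub_le (1 : ℂ) (conj a * b)
      _ ≤ 2 := by nlinarith [norm_nonneg a, norm_nonneg b, norm_one (α := ℂ)]
  rw [norm_mobius, mul_div_assoc', le_div_iff₀ hpos]
  nlinarith [norm_nonneg (a - b)]

lemma norm_mobius_le_of_norm_le {t : ℝ} (ht : t < 1) {a b : ℂ} (ha : ‖a‖ ≤ t) (hb : ‖b‖ ≤ t) :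
    ‖mobius a b‖ ≤ 2 * t / (1 - t ^ 2) := by
  have ht0 : 0 ≤ t := (norm_nonneg a).trans ha
  have hnum : ‖a - b‖ ≤ 2 * t := (norm_sub_le a b).trans (by linarith)
  have hden : 1 - t ^ 2 ≤ ‖1 - conj a * b‖ := by
    have : ‖conj a * b‖ ≤ t ^ 2 := by
      rw [norm_mul, RCLike.norm_conj, sq]
      exact mul_le_mul ha hb (norm_nonneg b) ht0
    have := norm_sub_norm_le (1 : ℂ) (conj a * b)
    rw [norm_one] at this
    linarith
  rw [norm_mobius]
  exact div_le_div₀ (by linarith) hnum (by nlinarith) hden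

theorem norm_mobius_apply_le_mul {F : ℂ → ℂ} {t : ℝ} (hd : DifferentiableOn ℂ F (ball 0 1))
    (ht : t < 1) (hF : MapsTo F (ball 0 1) (ball 0 t)) {z w : ℂ} (hz : ‖z‖ < 1)
    (hw : ‖w‖ < 1) :
    ‖mobius (F w) (F z)‖ ≤ 2 * t / (1 + t ^ 2) * ‖mobius w z‖ := by
  have ht0 : 0 < t := pos_of_mem_ball (hF (mem_ball_self one_pos))
  have htC : (t : ℂ) ≠ 0 := Complex.ofReal_ne_zero.2 ht0.ne'
  have hgF : ∀ u, (t : ℂ) * (F u / t) = F u := fun u => mul_div_cancel₀ _ htC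
  have hg : ∀ u, ‖u‖ < 1 → ‖F u / t‖ < 1 := fun u hu => by
    rw [norm_div, Complex.norm_real, Real.norm_of_nonneg ht0.le, div_lt_one ht0]
    exact mem_ball_zero_iff.1 (hF (mem_ball_zero_iff.2 hu))
  have hpick := norm_mobius_apply_le (hd.div_const (t : ℂ))
    (fun u hu => mem_ball_zero_iff.2 (hg u (mem_ball_zero_iff.1 hu))) hz hw
  calc ‖mobius (F w) (F z)‖ = ‖mobius (t * (F w / t)) (t * (F z / t))‖ := by rw [hgF, hgF]
    _ ≤ 2 * t / (1 + t ^ 2) * ‖mobius (F w / t) (F z / t)‖ :=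
      norm_mobius_ofReal_mul_le ht0.le ht.le (hg w hw) (hg z hz).le
    _ ≤ 2 * t / (1 + t ^ 2) * ‖mobius w z‖ := by gcongr

theorem dist_iterate_le_of_mapsTo_ball_zero {F : ℂ → ℂ} {t : ℝ}
    (hd : DifferentiableOn ℂ F (ball 0 1)) (ht : t < 1) (hF : MapsTo F (ball 0 1) (ball 0 t))
    (n : ℕ) {a b : ℂ} (ha : a ∈ ball 0 t) (hb : b ∈ ball 0 t) :
    dist (F^[n] a) (F^[n] b) ≤ 4 * t / (1 - t ^ 2) * (2 * t / (1 + t ^ 2)) ^ n := by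
  have ht0 : 0 < t := pos_of_mem_ball ha
  have hFt : MapsTo F (ball 0 t) (ball 0 t) := hF.mono_left (ball_subset_ball ht.le)
  have hlt : ∀ k, ∀ c ∈ ball (0 : ℂ) t, ‖F^[k] c‖ < 1 := fun k c hc =>
    (mem_ball_zero_iff.1 (hFt.iterate k hc)).trans ht
  have hmob : ‖mobius (F^[n] a) (F^[n] b)‖ ≤ (2 * t / (1 + t ^ 2)) ^ n * ‖mobius a b‖ := by
    induction n with
    | zero => simp
    | succ k ih =>
      rw [iterate_succ_apply', iterate_succ_apply', pow_succ', mul_assoc]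
      exact (norm_mobius_apply_le_mul hd ht hF (hlt k b hb) (hlt k a ha)).trans
        (by gcongr)
  have hab := norm_mobius_le_of_norm_le ht (mem_ball_zero_iff.1 ha).le
    (mem_ball_zero_iff.1 hb).le
  calc dist (F^[n] a) (F^[n] b) ≤ 2 * ‖mobius (F^[n] a) (F^[n] b)‖ :=
        (dist_eq_norm _ _).trans_le (norm_sub_le_two_mul_norm_mobius (hlt n a ha) (hlt n b hb).le)
    _ ≤ 2 * ((2 * t / (1 + t ^ 2)) ^ n * (2 * t / (1 - t ^ 2))) := by grw [hmob, hab]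
    _ = 4 * t / (1 - t ^ 2) * (2 * t / (1 + t ^ 2)) ^ n := by ring

theorem exists_dist_iterate_le_of_mapsTo_ball {f : ℂ → ℂ} {z₀ : ℂ} {r s : ℝ}
    (hd : DifferentiableOn ℂ f (ball z₀ r)) (hs : 0 < s) (hsr : s < r)
    (hf : MapsTo f (ball z₀ r) (ball z₀ s)) :
    ∃ C > 0, ∃ lam, 0 < lam ∧ lam < 1 ∧ ∀ n, ∀ a ∈ ball z₀ s, ∀ b ∈ ball z₀ s,
      dist (f^[n] a) (f^[n] b) ≤ C * lam ^ n := by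
  have hr : 0 < r := hs.trans hsr
  have hrC : (r : ℂ) ≠ 0 := Complex.ofReal_ne_zero.2 hr.ne'
  set φ : ℂ → ℂ := fun w => z₀ + r * w
  have hφ_dist : ∀ x y, dist (φ x) (φ y) = r * dist x y := fun x y => by
    simp only [φ, dist_eq_norm, add_sub_add_left_eq_sub, ← mul_sub, norm_mul, Complex.norm_real,
      Real.norm_of_nonneg hr.le]
  have hφ_ball : ∀ {ρ w}, φ w ∈ ball z₀ (r * ρ) ↔ w ∈ ball 0 ρ := fun {ρ w} => by
    have hφ0 : φ 0 = z₀ := by simp [φ]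
    rw [mem_ball, mem_ball, ← hφ0, hφ_dist, mul_lt_mul_iff_right₀ hr]
  have hφ_inv : ∀ a, φ ((a - z₀) / r) = a := fun a => by
    simp only [φ]; rw [mul_div_cancel₀ _ hrC, add_sub_cancel]
  have hφ_maps : MapsTo φ (ball 0 1) (ball z₀ r) := fun w hw => by
    simpa using (hφ_ball (ρ := 1)).2 hw
  set F : ℂ → ℂ := fun w => (f (φ w) - z₀) / r
  have hφF : Semiconj φ F f := fun w => by
    simp only [φ, F]; rw [mul_div_cancel₀ _ hrC, add_sub_cancel]
  set t := s / r
  have hrt : r * t = s := mul_div_cancel₀ s hr.ne'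
  have ht0 : 0 < t := div_pos hs hr
  have ht1 : t < 1 := (div_lt_one hr).2 hsr
  have hFd : DifferentiableOn ℂ F (ball 0 1) :=
    ((hd.comp (by fun_prop) hφ_maps).sub_const z₀).div_const _
  have hFmaps : MapsTo F (ball 0 1) (ball 0 t) := fun w hw =>
    hφ_ball.1 (by rw [hφF, hrt]; exact hf (hφ_maps hw))
  have hφ_ball_t : ∀ a ∈ ball z₀ s, (a - z₀) / r ∈ ball 0 t := fun a ha =>
    hφ_ball.1 (by rwa [hφ_inv, hrt])
  have ht2 : 0 < 1 - t ^ 2 := by nlinarith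
  refine ⟨r * (4 * t / (1 - t ^ 2)), by positivity, 2 * t / (1 + t ^ 2), by positivity,
    (div_lt_one (by positivity)).2 (by nlinarith), fun n a ha b hb => ?_⟩
  rw [← hφ_inv a, ← hφ_inv b, ← hφF.iterate_right, ← hφF.iterate_right, hφ_dist, mul_assoc]
  gcongr
  exact dist_iterate_le_of_mapsTo_ball_zero hFd ht1 hFmaps n (hφ_ball_t a ha) (hφ_ball_t b hb)

theorem dist_iterate_le_of_mapsTo {α : Type*} [PseudoMetricSpace α] {f : α → α} {K L : Set α}
    {C lam : ℝ} (hf : MapsTo f K L) (hK : Bornology.IsBounded K) (hlam : 0 < lam)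
    (hL : ∀ n, ∀ a ∈ L, ∀ b ∈ L, dist (f^[n] a) (f^[n] b) ≤ C * lam ^ n) :
    ∀ n, ∀ a ∈ K, ∀ b ∈ K, dist (f^[n] a) (f^[n] b) ≤ max (diam K) (C / lam) * lam ^ n := by
  rintro (_ | n) a ha b hb
  · simpa using (dist_le_diam_of_mem hK ha hb).trans (le_max_left _ _)
  · calc dist (f^[n + 1] a) (f^[n + 1] b)
        ≤ C / lam * lam ^ (n + 1) := by
          rw [iterate_succ_apply, iterate_succ_apply, pow_succ', ← mul_assoc,
            div_mul_cancel₀ _ hlam.ne']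
          exact hL n _ (hf ha) _ (hf hb)
      _ ≤ max (diam K) (C / lam) * lam ^ (n + 1) := by gcongr; exact le_max_right _ _

theorem exists_fixedPoint_tendstoUniformlyOn_iterate {α : Type*} [MetricSpace α]
    [CompleteSpace α] {f : α → α} {K : Set α} {C lam : ℝ} (hK : IsClosed K) (hne : K.Nonempty)
    (hf : MapsTo f K K) (hfc : ContinuousOn f K) (hlam0 : 0 ≤ lam) (hlam1 : lam < 1)
    (hdist : ∀ n, ∀ a ∈ K, ∀ b ∈ K, dist (f^[n] a) (f^[n] b) ≤ C * lam ^ n) :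
    ∃ p ∈ K, f p = p ∧ (∀ q ∈ K, f q = q → q = p) ∧
      TendstoUniformlyOn (fun n a => f^[n] a) (fun _ => p) atTop K := by
  obtain ⟨a, ha⟩ := hne
  have hcauchy : CauchySeq fun n => f^[n] a := cauchySeq_of_le_geometric lam C hlam1 fun n => by
    simpa only [iterate_succ_apply] using hdist n a ha (f a) (hf ha)
  obtain ⟨p, hlim⟩ := cauchySeq_tendsto_of_complete hcauchy
  have horbit : ∀ n, f^[n] a ∈ K := fun n => hf.iterate n ha
  have hp : p ∈ K := hK.mem_of_tendsto hlim (Eventually.of_forall horbit)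
  have hfp : f p = p := by
    have hmap : Tendsto (fun n => f (f^[n] a)) atTop (𝓝 (f p)) :=
      (hfc p hp).tendsto.comp (tendsto_nhdsWithin_iff.2 ⟨hlim, Eventually.of_forall horbit⟩)
    simp only [← iterate_succ_apply' f] at hmap
    exact tendsto_nhds_unique hmap ((tendsto_add_atTop_iff_nat 1).2 hlim)
  have hgeom : Tendsto (fun n => C * lam ^ n) atTop (𝓝 0) := by
    simpa using (tendsto_pow_atTop_nhds_zero_of_lt_one hlam0 hlam1).const_mul C
  have hunif : TendstoUniformlyOn (fun n a => f^[n] a) (fun _ => p) atTop K := by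
    refine Metric.tendstoUniformlyOn_iff.2 fun ε hε => ?_
    filter_upwards [hgeom.eventually_lt_const hε] with n hn b hb
    rw [dist_comm, ← iterate_fixed hfp n]
    exact (hdist n b hb p hp).trans_lt hn
  refine ⟨p, hp, hfp, fun q hq hfq => ?_, hunif⟩
  simpa [iterate_fixed hfq] using hunif.tendsto_at hq

theorem norm_deriv_le_of_dist_iterate_le {f : ℂ → ℂ} {U : Set ℂ} {p : ℂ} {C lam : ℝ}
    (hU : IsOpen U) (hd : DifferentiableOn ℂ f U) (hf : MapsTo f U U) (hp : p ∈ U)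
    (hfp : f p = p) (hlam : 0 < lam) (hdist : ∀ n, ∀ z ∈ U, dist (f^[n] z) p ≤ C * lam ^ n) :
    ‖deriv f p‖ ≤ lam := by
  obtain ⟨δ, hδ, hball⟩ := Metric.isOpen_iff.1 hU p hp
  have hpow : ∀ n, ‖deriv f p‖ ^ n ≤ C / δ * lam ^ n := fun n => by
    have hschwarz := Complex.norm_deriv_le_div_of_mapsTo_ball ((hd.iterate hf n).mono hball)
      (fun z hz => by rw [iterate_fixed hfp]; exact mem_closedBall.2 (hdist n z (hball hz))) hδ
    rw [(HasDerivAt.iterate p (hd.differentiableAt (hU.mem_nhds hp)).hasDerivAt hfp n).deriv,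
      norm_pow] at hschwarz
    rwa [div_mul_eq_mul_div]
  by_contra! h
  obtain ⟨n, hn⟩ := pow_unbounded_of_one_lt (C / δ) ((one_lt_div hlam).2 h)
  rw [div_pow, lt_div_iff₀ (by positivity)] at hn
  linarith [hpow n]

theorem schwarz_contraction_disk_general (z₀ : ℂ) (r : ℝ) (hr : 0 < r) (f : ℂ → ℂ)
    (U : Set ℂ) (hDU : closure (Metric.ball z₀ r) ⊆ U)
    (hf : DifferentiableOn ℂ f U)
    (hmaps : f '' closure (Metric.ball z₀ r) ⊆ Metric.ball z₀ r) :
    ∃ p ∈ Metric.ball z₀ r, f p = p ∧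
      (∀ q ∈ Metric.ball z₀ r, f q = q → q = p) ∧
      ‖deriv f p‖ < 1 ∧
      (∃ C : ℝ, 0 < C ∧ ∃ lam : ℝ, 0 < lam ∧ lam < 1 ∧
        ∀ k : ℕ, Metric.diam (f^[k] '' closure (Metric.ball z₀ r)) ≤ C * lam ^ k) ∧
      TendstoUniformlyOn (fun (k : ℕ) (z : ℂ) => f^[k] z) (fun _ => p)
        Filter.atTop (closure (Metric.ball z₀ r)) := by
  rw [closure_ball z₀ hr.ne'] at hDU hmaps ⊢
  have hcont : ContinuousOn f (closedBall z₀ r) := hf.continuousOn.mono hDU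
  obtain ⟨s, hsr, hfs⟩ := exists_lt_subset_ball
    ((isCompact_closedBall z₀ r).image_of_continuousOn hcont).isClosed hmaps
  have hfK : MapsTo f (closedBall z₀ r) (ball z₀ s) := mapsTo_iff_image_subset.2 hfs
  have hs : 0 < s := pos_of_mem_ball (hfK (mem_closedBall_self hr.le))
  have hsB : ball z₀ s ⊆ ball z₀ r := ball_subset_ball hsr.le
  have hfB : MapsTo f (ball z₀ r) (ball z₀ r) := fun z hz => hsB (hfK (ball_subset_closedBall hz))
  have hdB : DifferentiableOn ℂ f (ball z₀ r) := hf.mono (ball_subset_closedBall.trans hDU)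
  obtain ⟨C, hC, lam, hlam0, hlam1, hdist⟩ := exists_dist_iterate_le_of_mapsTo_ball hdB hs hsr
    (hfK.mono_left ball_subset_closedBall)
  have hdistK := dist_iterate_le_of_mapsTo hfK isBounded_closedBall hlam0 hdist
  obtain ⟨p, hpK, hfp, huniq, hunif⟩ := exists_fixedPoint_tendstoUniformlyOn_iterate (f := f)
    isClosed_closedBall (nonempty_closedBall.2 hr.le)
    (fun z hz => ball_subset_closedBall (hsB (hfK hz))) hcont hlam0.le hlam1 hdistK
  have hp : p ∈ ball z₀ r := hsB (hfp ▸ hfK hpK)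
  have hderiv : ‖deriv f p‖ ≤ lam := norm_deriv_le_of_dist_iterate_le isOpen_ball hdB hfB hp hfp
    hlam0 fun n z hz => by
      simpa [iterate_fixed hfp] using hdistK n z (ball_subset_closedBall hz) p hpK
  refine ⟨p, hp, hfp, fun q hq => huniq q (ball_subset_closedBall hq), hderiv.trans_lt hlam1,
    ⟨max (diam (closedBall z₀ r)) (C / lam), lt_max_of_lt_right (div_pos hC hlam0), lam, hlam0,
      hlam1, fun k => ?_⟩, hunif⟩
  refine diam_le_of_forall_dist_le (by positivity) ?_
  rintro _ ⟨a, ha, rfl⟩ _ ⟨b, hb, rfl⟩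
  exact hdistK k a ha b hb

/-- Let `D = B(z₀, r)` be a (nonempty) open disk in `ℂ` and `f` holomorphic on a
neighbourhood of the closed disk `D̄` with `f(D̄) ⊆ D`. Then `f` has a unique
fixed point `p` in `D`, it is attracting (`|f′(p)| < 1`), the diameters of the
iterated images of `D̄` decay geometrically, and `f^[k] → p` uniformly on `D̄`. -/
theorem schwarz_contraction_disk (z₀ : ℂ) (r : ℝ) (hr : 0 < r) (f : ℂ → ℂ)
    (U : Set ℂ) (hU : IsOpen U) (hDU : closure (Metric.ball z₀ r) ⊆ U)
    (hf : DifferentiableOn ℂ f U)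
    (hmaps : f '' closure (Metric.ball z₀ r) ⊆ Metric.ball z₀ r) :
    ∃ p ∈ Metric.ball z₀ r, f p = p ∧
      (∀ q ∈ Metric.ball z₀ r, f q = q → q = p) ∧
      ‖deriv f p‖ < 1 ∧
      (∃ C : ℝ, 0 < C ∧ ∃ lam : ℝ, 0 < lam ∧ lam < 1 ∧
        ∀ k : ℕ, Metric.diam (f^[k] '' closure (Metric.ball z₀ r)) ≤ C * lam ^ k) ∧
      TendstoUniformlyOn (fun (k : ℕ) (z : ℂ) => f^[k] z) (fun _ => p)
        Filter.atTop (closure (Metric.ball z₀ r)) :=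
  schwarz_contraction_disk_general z₀ r hr f U hDU hf hmaps
end
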